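/- arXiv:1011.6168 — 7 statements merged into one kernel-verified Lean document; each statement's English description precedes it below -/
import Mathlib

section
/- Lemma (real index, even-dimensional Lorentzian case): let m ≥ 1 and n = 2m. Every m-dimensional totally null complex subspace N of ℂ^{2m} (with respect to the complexified Lorentzian form B_ℂ) has real index exactly 1, i.e. dim_ℂ (N ⊓ c(N)) = 1. -/
/-!
Let `minkNormSq v = -|v₀|² + ∑_{i ≥ 1} |vᵢ|² = B(v, c v)`. A vector `v` of `N ⊓ c(N)` is
`B`-orthogonal to `c v ∈ N`, so `minkNormSq v = 0` and `v` is determined by `v₀`: hence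
`dim (N ⊓ c(N)) ≤ 1`. Conversely, a null vector `x` satisfies `2 x₀² = ∑ xᵢ²`, so
`minkNormSq x ≥ 0`; since `Re B(x, c y) = 0` for `x, y ∈ N`, `minkNormSq` stays nonnegative on
`N + c(N)`, which therefore misses `e₀` and is a proper subspace. Then
`dim (N ⊓ c(N)) = 2m - dim (N + c(N)) ≥ 1`.
-/
/-- The complexified Minkowski bilinear form on `ℂⁿ`:
`B(x,y) = -x₀·y₀ + ∑_{i=1}^{n-1} x_i·y_i`. -/
noncomputable def minkB (n : ℕ) (x y : Fin n → ℂ) : ℂ :=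
  ∑ i : Fin n, if (i : ℕ) = 0 then -(x i * y i) else x i * y i

/-- The image of a complex subspace of `ℂⁿ` under componentwise complex
conjugation (again a complex subspace, since conjugation is an antilinear
involution): `c(N) = {x | c(x) ∈ N}`. -/
noncomputable def conjSubmodule (n : ℕ) (N : Submodule ℂ (Fin n → ℂ)) : Submodule ℂ (Fin n → ℂ) where
  carrier := {x | (fun i => (starRingEnd ℂ) (x i)) ∈ N}
  add_mem' := by
    intro a b ha hb
    have h : (fun i => (starRingEnd ℂ) ((a + b) i))
        = (fun i => (starRingEnd ℂ) (a i)) + (fun i => (starRingEnd ℂ) (b i)) := by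
      funext i; simp
    show (fun i => (starRingEnd ℂ) ((a + b) i)) ∈ N
    rw [h]; exact N.add_mem ha hb
  zero_mem' := by
    show (fun i => (starRingEnd ℂ) ((0 : Fin n → ℂ) i)) ∈ N
    have h : (fun i : Fin n => (starRingEnd ℂ) ((0 : Fin n → ℂ) i)) = (0 : Fin n → ℂ) := by
      funext i; simp
    rw [h]; exact N.zero_mem
  smul_mem' := by
    intro c a ha
    have h : (fun i => (starRingEnd ℂ) ((c • a) i))
        = (starRingEnd ℂ) c • (fun i => (starRingEnd ℂ) (a i)) := by
      funext i; simp [mul_comm]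
    show (fun i => (starRingEnd ℂ) ((c • a) i)) ∈ N
    rw [h]; exact N.smul_mem ((starRingEnd ℂ) c) ha

open Complex Module

section MinkowskiForm

variable {n : ℕ}

lemma sum_ite_val_eq_zero_neg [NeZero n] {M : Type*} [AddCommGroup M] (a : Fin n → M) :
    (∑ i : Fin n, if (i : ℕ) = 0 then -a i else a i) = ∑ i, a i - 2 • a 0 := by
  have hterm (i : Fin n) :
      (if (i : ℕ) = 0 then -a i else a i) = a i - if i = 0 then 2 • a i else 0 := by
    simp only [Fin.val_eq_zero_iff]
    split_ifs <;> abel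
  simp only [hterm, Finset.sum_sub_distrib, Finset.sum_ite_eq', Finset.mem_univ, if_true]

noncomputable def minkNormSq (n : ℕ) (v : Fin n → ℂ) : ℝ :=
  ∑ i : Fin n, if (i : ℕ) = 0 then -normSq (v i) else normSq (v i)

lemma minkB_star_self (v : Fin n → ℂ) : minkB n v (star v) = minkNormSq n v := by
  simp only [minkB, minkNormSq, ofReal_sum, Pi.star_apply, star_def, mul_conj]
  exact Finset.sum_congr rfl fun i _ => by split_ifs <;> simp

lemma minkNormSq_star (v : Fin n → ℂ) : minkNormSq n (star v) = minkNormSq n v := by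
  simp [minkNormSq]

lemma minkNormSq_add (x y : Fin n → ℂ) :
    minkNormSq n (x + y) = minkNormSq n x + minkNormSq n y + 2 * (minkB n x (star y)).re := by
  simp only [minkNormSq, minkB, re_sum, Finset.mul_sum, ← Finset.sum_add_distrib]
  refine Finset.sum_congr rfl fun i _ => ?_
  split_ifs
  · simp only [Pi.add_apply, normSq_add, Pi.star_apply, star_def, neg_re]
    ring
  · simp only [Pi.add_apply, normSq_add, Pi.star_apply, star_def]

lemma minkNormSq_nonneg_of_minkB_self_eq_zero [NeZero n] {v : Fin n → ℂ} (hv : minkB n v v = 0) :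
    0 ≤ minkNormSq n v := by
  rw [minkB, sum_ite_val_eq_zero_neg, sub_eq_zero] at hv
  rw [minkNormSq, sum_ite_val_eq_zero_neg, sub_nonneg]
  calc 2 • normSq (v 0) = ‖2 • (v 0 * v 0)‖ := by simp [normSq_eq_norm_sq, sq]
    _ = ‖∑ i, v i * v i‖ := by rw [hv]
    _ ≤ ∑ i, ‖v i * v i‖ := norm_sum_le _ _
    _ = ∑ i, normSq (v i) := by simp [normSq_eq_norm_sq, sq]

lemma eq_zero_of_minkB_star_self_eq_zero [NeZero n] {v : Fin n → ℂ} (hv : minkB n v (star v) = 0)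
    (h0 : v 0 = 0) : v = 0 := by
  rw [minkB_star_self, ofReal_eq_zero, minkNormSq, sum_ite_val_eq_zero_neg, h0, map_zero,
    smul_zero, sub_zero, Finset.sum_eq_zero_iff_of_nonneg fun i _ => normSq_nonneg _] at hv
  funext i
  exact normSq_eq_zero.mp (hv i (Finset.mem_univ i))

lemma minkNormSq_single_zero [NeZero n] : minkNormSq n (Pi.single 0 1) = -1 := by
  rw [minkNormSq, sum_ite_val_eq_zero_neg]
  norm_num [Pi.single_apply]

end MinkowskiForm

section ConjSubmodule

variable {n : ℕ} {N : Submodule ℂ (Fin n → ℂ)}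

lemma mem_conjSubmodule_iff {x : Fin n → ℂ} : x ∈ conjSubmodule n N ↔ star x ∈ N := Iff.rfl

def conjSubmoduleAddEquiv (N : Submodule ℂ (Fin n → ℂ)) : conjSubmodule n N ≃+ N where
  toFun x := ⟨star x.1, x.2⟩
  invFun y := ⟨star y.1, by rw [mem_conjSubmodule_iff, star_star]; exact y.2⟩
  left_inv x := Subtype.ext (star_star x.1)
  right_inv y := Subtype.ext (star_star y.1)
  map_add' x y := Subtype.ext (star_add x.1 y.1)

lemma finrank_conjSubmodule (N : Submodule ℂ (Fin n → ℂ)) :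
    finrank ℂ (conjSubmodule n N) = finrank ℂ N :=
  congrArg Cardinal.toNat <| rank_eq_of_equiv_equiv star (conjSubmoduleAddEquiv N)
    star_involutive.bijective fun r x => Subtype.ext (star_smul r x.1)

variable [NeZero n] (hnull : ∀ x ∈ N, ∀ y ∈ N, minkB n x y = 0)
include hnull

lemma finrank_inf_conjSubmodule_le_one : finrank ℂ ↥(N ⊓ conjSubmodule n N) ≤ 1 := by
  have hinj : Function.Injective ((LinearMap.proj 0).comp (N ⊓ conjSubmodule n N).subtype) := by
    rw [← LinearMap.ker_eq_bot, LinearMap.ker_eq_bot']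
    rintro ⟨v, hvN, hvc⟩ hv0
    exact Subtype.ext (eq_zero_of_minkB_star_self_eq_zero (hnull v hvN _ hvc) hv0)
  simpa using LinearMap.finrank_le_finrank_of_injective hinj

lemma minkNormSq_nonneg_of_mem_sup {v : Fin n → ℂ} (hv : v ∈ N ⊔ conjSubmodule n N) :
    0 ≤ minkNormSq n v := by
  obtain ⟨x, hx, y, hy, rfl⟩ := Submodule.mem_sup.mp hv
  rw [mem_conjSubmodule_iff] at hy
  have hy' : 0 ≤ minkNormSq n y := by
    simpa [minkNormSq_star] using minkNormSq_nonneg_of_minkB_self_eq_zero (hnull _ hy _ hy)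
  rw [minkNormSq_add, hnull x hx _ hy, zero_re, mul_zero, add_zero]
  exact add_nonneg (minkNormSq_nonneg_of_minkB_self_eq_zero (hnull x hx x hx)) hy'

lemma sup_conjSubmodule_ne_top : N ⊔ conjSubmodule n N ≠ ⊤ := fun htop => by
  have := minkNormSq_nonneg_of_mem_sup hnull (htop ▸ Submodule.mem_top (x := Pi.single 0 1))
  rw [minkNormSq_single_zero] at this
  norm_num at this

end ConjSubmodule

/-- Real index in the even-dimensional Lorentzian case: every `m`-dimensional
totally null complex subspace `N` of `ℂ^{2m}` has real index exactly `1`,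
i.e. `dim_ℂ (N ⊓ c(N)) = 1`. -/
theorem real_index_even (m : ℕ) (hm : 1 ≤ m)
    (N : Submodule ℂ (Fin (2 * m) → ℂ))
    (hdim : Module.finrank ℂ N = m)
    (hnull : ∀ x ∈ N, ∀ y ∈ N, minkB (2 * m) x y = 0) :
    Module.finrank ℂ ↥(N ⊓ conjSubmodule (2 * m) N) = 1 := by
  have : NeZero (2 * m) := ⟨by omega⟩
  have hsup : finrank ℂ ↥(N ⊔ conjSubmodule (2 * m) N) < 2 * m := by
    simpa using Submodule.finrank_lt (sup_conjSubmodule_ne_top hnull)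
  have hinf := finrank_inf_conjSubmodule_le_one hnull
  have hsum := Submodule.finrank_sup_add_finrank_inf_eq N (conjSubmodule (2 * m) N)
  rw [finrank_conjSubmodule, hdim] at hsum
  omega
end

section
/- Lemma (real index, odd-dimensional Lorentzian case): let m ≥ 1 and n = 2m+1. Every m-dimensional totally null complex subspace N of ℂ^{2m+1} (with respect to the complexified Lorentzian form B_ℂ) has real index 0 or 1, i.e. dim_ℂ (N ⊓ c(N)) ≤ 1. -/
/-!
`x ↦ B(x, c x)` is the Lorentzian Hermitian form `-|x₀|² + ∑_{i ≥ 1} |xᵢ|²`; it vanishes on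
`N ⊓ c(N)` because `x ∈ c(N)` means `c x ∈ N`. Its restriction to the hyperplane `x₀ = 0` is
positive definite, so on a subspace where it vanishes the coordinate `x₀` is injective, and such a
subspace has dimension at most `1`.
-/

open ComplexConjugate

lemma minkB_conj_self_succ {n : ℕ} (x : Fin (n + 1) → ℂ) :
    minkB (n + 1) x (fun i => conj (x i)) =
      -(Complex.normSq (x 0) : ℂ) + ∑ j : Fin n, (Complex.normSq (x j.succ) : ℂ) := by
  simp only [minkB, Fin.sum_univ_succ, Fin.val_zero, if_true, Fin.val_succ,
    Nat.succ_ne_zero, if_false, Complex.mul_conj]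

lemma eq_zero_of_minkB_conj_self_eq_zero {n : ℕ} {x : Fin (n + 1) → ℂ}
    (hx : minkB (n + 1) x (fun i => conj (x i)) = 0) (hx₀ : x 0 = 0) : x = 0 := by
  rw [minkB_conj_self_succ, hx₀, map_zero, Complex.ofReal_zero, neg_zero, zero_add] at hx
  have hsum : ∑ j : Fin n, Complex.normSq (x j.succ) = 0 := mod_cast hx
  have hsucc : ∀ j : Fin n, x j.succ = 0 := fun j ↦ Complex.normSq_eq_zero.mp <|
    (Finset.sum_eq_zero_iff_of_nonneg fun j _ ↦ Complex.normSq_nonneg _).mp hsum j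
      (Finset.mem_univ j)
  funext i
  exact Fin.cases hx₀ hsucc i

lemma finrank_le_one_of_minkB_conj_self_eq_zero {n : ℕ} (W : Submodule ℂ (Fin (n + 1) → ℂ))
    (hW : ∀ x ∈ W, minkB (n + 1) x (fun i => conj (x i)) = 0) :
    Module.finrank ℂ W ≤ 1 := by
  let x₀ : W →ₗ[ℂ] ℂ := (LinearMap.proj 0).comp W.subtype
  have hinj : Function.Injective x₀ := by
    refine (injective_iff_map_eq_zero x₀).mpr fun x hx ↦ ?_
    exact Subtype.ext (eq_zero_of_minkB_conj_self_eq_zero (hW x x.2) hx)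
  simpa using LinearMap.finrank_le_finrank_of_injective hinj

theorem real_index_odd_general (m : ℕ)
    (N : Submodule ℂ (Fin (2 * m + 1) → ℂ))
    (hnull : ∀ x ∈ N, ∀ y ∈ N, minkB (2 * m + 1) x y = 0) :
    Module.finrank ℂ ↥(N ⊓ conjSubmodule (2 * m + 1) N) ≤ 1 :=
  finrank_le_one_of_minkB_conj_self_eq_zero _ fun x hx ↦ hnull x hx.1 _ hx.2

/-- Real index in the odd-dimensional Lorentzian case: every `m`-dimensional
totally null complex subspace `N` of `ℂ^{2m+1}` has real index `0` or `1`,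
i.e. `dim_ℂ (N ⊓ c(N)) ≤ 1`. -/
theorem real_index_odd (m : ℕ) (hm : 1 ≤ m)
    (N : Submodule ℂ (Fin (2 * m + 1) → ℂ))
    (hdim : Module.finrank ℂ N = m)
    (hnull : ∀ x ∈ N, ∀ y ∈ N, minkB (2 * m + 1) x y = 0) :
    Module.finrank ℂ ↥(N ⊓ conjSubmodule (2 * m + 1) N) ≤ 1 :=
  real_index_odd_general m N hnull
end

section
/- Algebraic core of the five-dimensional Goldberg–Sachs theorem (Theorem 3.2): Let κ, σ, ϝ, χ, ψ, η, φ, Ψ₂, Ψ₃, Ψ₃¹, Ψ₃², Ψ₄, Ψ₄⁰ be complex numbers and Ψ₂⁰ a real number, with Ψ₂ ≠ 0, Ψ₂⁰ ≠ 0 and Ψ₂ ≠ conj(Ψ₂). Assume the following fifteen equations hold: (1) σΨ₂⁰ + 3σΨ₂ − κ·conj(Ψ₃¹) = 0; (2) κΨ₂⁰ − 3κΨ₂ = 0; (3) (−χ+2ψ)Ψ₂⁰ + ψΨ₂ + (χ+ψ)·conj(Ψ₂) − ϝ·conj(Ψ₃) − κΨ₃² = 0; (4) φΨ₂ − φ·conj(Ψ₂)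 + κ·conj(Ψ₄⁰) + (−2χ+ψ)·conj(Ψ₃¹) + (χ+ψ)·conj(Ψ₃) − ϝ·conj(Ψ₄) + 2σ·conj(Ψ₃²) + σΨ₃² = 0; (5) −ϝΨ₂ + ϝ·conj(Ψ₂) = 0; (6) (2χ−ψ)Ψ₂⁰ − χΨ₂ + (−χ−ψ)·conj(Ψ₂) − ϝ·conj(Ψ₃¹) + ϝ·conj(Ψ₃) − 2κ·conj(Ψ₃²) + κΨ₃² = 0; (7) (−η+2ψ)Ψ₂⁰ + (−χ−3η+ψ)Ψ₂ + (χ+ψ)·conj(Ψ₂) − ϝ·conj(Ψ₃¹) − ϝ·conj(Ψ₃) − 2κ·conj(Ψ₃²) − κΨ₃² = 0; (8) ϝΨ₂⁰ + ϝ·conj(Ψ₂) = 0; (9) φΨ₂⁰ − φ·conj(Ψ₂) + κ·conj(Ψ₄⁰) + (−2χ−η)·conj(Ψ₃¹) + (χ+ψ)·conj(Ψ₃) − ϝ·conj(Ψ₄) + σΨ₃² = 0; (10) (2χ+η)Ψ₂⁰ + (−χ−3η+ψ)Ψ₂ + (−χ−ψ)·conj(Ψ₂) − ϝ·conj(Ψ₃¹)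 + ϝ·conj(Ψ₃) − 2κ·conj(Ψ₃²) + κΨ₃² = 0; (11) −2κΨ₂⁰ = 0; (12) 2σΨ₂⁰ − 2κ·conj(Ψ₃¹) = 0; (13) (χ−η)Ψ₂⁰ + (−χ−3η)Ψ₂ − ϝ·conj(Ψ₃¹) − 2κ·conj(Ψ₃²) = 0; (14) φΨ₂⁰ − φΨ₂ + (−η−ψ)·conj(Ψ₃¹) − 2σ·conj(Ψ₃²) = 0; (15) (η+ψ)Ψ₂⁰ + (−3η+ψ)Ψ₂ = 0. Then κ = σ = ϝ = χ = ψ = η = φ = 0. -/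
open ComplexConjugate

/-- Algebraic core of the five-dimensional Goldberg–Sachs theorem
(Theorem 3.2 of the paper): the fifteen algebraic components of the Bianchi
identity for a generically algebraically special Weyl tensor force the
vanishing of the spin coefficients `κ, σ, ϝ, χ, ψ, η, φ`, i.e. the
integrability of the almost optical structure. -/
theorem goldberg_sachs_5d_algebraic_core
    (kap sig dig chi psi eta phi : ℂ)
    (P2 P3 P31 P32 P4 P40 : ℂ) (P20 : ℝ)
    (hP2 : P2 ≠ 0) (hP20 : (P20 : ℂ) ≠ 0) (hP2real : P2 ≠ conj P2)
    (e1 : sig * (P20 : ℂ) + 3 * sig * P2 - kap * conj P31 = 0)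
    (e2 : kap * (P20 : ℂ) - 3 * kap * P2 = 0)
    (e3 : (-chi + 2 * psi) * (P20 : ℂ) + psi * P2 + (chi + psi) * conj P2
        - dig * conj P3 - kap * P32 = 0)
    (e4 : phi * P2 - phi * conj P2 + kap * conj P40 + (-2 * chi + psi) * conj P31
        + (chi + psi) * conj P3 - dig * conj P4 + 2 * sig * conj P32 + sig * P32 = 0)
    (e5 : -dig * P2 + dig * conj P2 = 0)
    (e6 : (2 * chi - psi) * (P20 : ℂ) - chi * P2 + (-chi - psi) * conj P2
        - dig * conj P31 + dig * conj P3 - 2 * kap * conj P32 + kap * P32 = 0)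
    (e7 : (-eta + 2 * psi) * (P20 : ℂ) + (-chi - 3 * eta + psi) * P2
        + (chi + psi) * conj P2 - dig * conj P31 - dig * conj P3
        - 2 * kap * conj P32 - kap * P32 = 0)
    (e8 : dig * (P20 : ℂ) + dig * conj P2 = 0)
    (e9 : phi * (P20 : ℂ) - phi * conj P2 + kap * conj P40 + (-2 * chi - eta) * conj P31
        + (chi + psi) * conj P3 - dig * conj P4 + sig * P32 = 0)
    (e10 : (2 * chi + eta) * (P20 : ℂ) + (-chi - 3 * eta + psi) * P2
        + (-chi - psi) * conj P2 - dig * conj P31 + dig * conj P3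
        - 2 * kap * conj P32 + kap * P32 = 0)
    (e11 : -2 * kap * (P20 : ℂ) = 0)
    (e12 : 2 * sig * (P20 : ℂ) - 2 * kap * conj P31 = 0)
    (e13 : (chi - eta) * (P20 : ℂ) + (-chi - 3 * eta) * P2
        - dig * conj P31 - 2 * kap * conj P32 = 0)
    (e14 : phi * (P20 : ℂ) - phi * P2 + (-eta - psi) * conj P31 - 2 * sig * conj P32 = 0)
    (e15 : (eta + psi) * (P20 : ℂ) + (-3 * eta + psi) * P2 = 0) :
    kap = 0 ∧ sig = 0 ∧ dig = 0 ∧ chi = 0 ∧ psi = 0 ∧ eta = 0 ∧ phi = 0 := by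
  have hk : kap = 0 := by
    have h : kap * (P20 : ℂ) = 0 := by linear_combination (-(1:ℂ)/2) * e11
    exact (mul_eq_zero.mp h).resolve_right hP20
  have hs : sig = 0 := by
    have h : sig * (P20 : ℂ) = 0 := by
      linear_combination ((1:ℂ)/2) * e12 + (conj P31) * hk
    exact (mul_eq_zero.mp h).resolve_right hP20
  have hd : dig = 0 := by
    have h : dig * (conj P2 - P2) = 0 := by linear_combination e5
    have hne : conj P2 - P2 ≠ 0 := sub_ne_zero.mpr (fun h' => hP2real h'.symm)
    exact (mul_eq_zero.mp h).resolve_right hne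
  have hne1 : (P20 : ℂ) - P2 ≠ 0 := by
    intro h
    apply hP2real
    have hP : P2 = (P20 : ℂ) := (sub_eq_zero.mp h).symm
    rw [hP, Complex.conj_ofReal]
  have hne2 : (P20 : ℂ) + P2 ≠ 0 := by
    intro h
    apply hP2real
    have hP : P2 = -(P20 : ℂ) := by linear_combination h
    rw [hP, map_neg, Complex.conj_ofReal]
  have he : eta = 0 := by
    have h : eta * P2 = 0 := by
      linear_combination (-(1:ℂ)/6) * e7 + (-(1:ℂ)/6) * e10 + ((1:ℂ)/3) * e3
        + ((1:ℂ)/3) * e6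
    exact (mul_eq_zero.mp h).resolve_right hP2
  have hpsi : psi = 0 := by
    have h : psi * ((P20 : ℂ) + P2) = 0 := by
      linear_combination e15 + (3 * P2 - (P20 : ℂ)) * he
    exact (mul_eq_zero.mp h).resolve_right hne2
  have hchi : chi = 0 := by
    have h : chi * ((P20 : ℂ) - P2) = 0 := by
      linear_combination e13 + ((P20 : ℂ) + 3 * P2) * he + (conj P31) * hd
        + (2 * conj P32) * hk
    exact (mul_eq_zero.mp h).resolve_right hne1
  have hphi : phi = 0 := by
    have h : phi * ((P20 : ℂ) - P2) = 0 := by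
      linear_combination e14 + (conj P31) * he + (conj P31) * hpsi
        + (2 * conj P32) * hs
    exact (mul_eq_zero.mp h).resolve_right hne1
  exact ⟨hk, hs, hd, hchi, hpsi, he, hphi⟩
end

section
/- Degenerate variant of Theorem 3.2 (first bullet of Section 3.4.2): Let κ, σ, ϝ, χ, ψ, η, φ, Ψ₂, Ψ₃, Ψ₃¹, Ψ₃², Ψ₄, Ψ₄⁰ be complex numbers and Ψ₂⁰ a real number, and assume the same fifteen equations (1)–(15) as in the algebraic core of Theorem 3.2. Suppose that EITHER (Ψ₂⁰ = 0, Ψ₂ ≠ 0 and Ψ₂ ≠ conj(Ψ₂)) OR (Ψ₂ = 0 and Ψ₂⁰ ≠ 0). Then κ = σ = ϝ = χ = ψ = η = φ = 0. -/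
open ComplexConjugate

/-- Degenerate variant of Theorem 3.2 (first bullet of Section 3.4.2):
the conclusion of the algebraic core of the five-dimensional Goldberg–Sachs
theorem still holds under the stronger assumption that either `Ψ₂⁰ = 0`
(with `Ψ₂ ≠ 0` non-real) or `Ψ₂ = 0` (with `Ψ₂⁰ ≠ 0`). -/
theorem goldberg_sachs_5d_degenerate
    (kap sig dig chi psi eta phi : ℂ)
    (P2 P3 P31 P32 P4 P40 : ℂ) (P20 : ℝ)
    (hdeg : (P20 = 0 ∧ P2 ≠ 0 ∧ P2 ≠ conj P2) ∨ (P2 = 0 ∧ P20 ≠ 0))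
    (e1 : sig * (P20 : ℂ) + 3 * sig * P2 - kap * conj P31 = 0)
    (e2 : kap * (P20 : ℂ) - 3 * kap * P2 = 0)
    (e3 : (-chi + 2 * psi) * (P20 : ℂ) + psi * P2 + (chi + psi) * conj P2
        - dig * conj P3 - kap * P32 = 0)
    (e4 : phi * P2 - phi * conj P2 + kap * conj P40 + (-2 * chi + psi) * conj P31
        + (chi + psi) * conj P3 - dig * conj P4 + 2 * sig * conj P32 + sig * P32 = 0)
    (e5 : -dig * P2 + dig * conj P2 = 0)
    (e6 : (2 * chi - psi) * (P20 : ℂ) - chi * P2 + (-chi - psi) * conj P2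
        - dig * conj P31 + dig * conj P3 - 2 * kap * conj P32 + kap * P32 = 0)
    (e7 : (-eta + 2 * psi) * (P20 : ℂ) + (-chi - 3 * eta + psi) * P2
        + (chi + psi) * conj P2 - dig * conj P31 - dig * conj P3
        - 2 * kap * conj P32 - kap * P32 = 0)
    (e8 : dig * (P20 : ℂ) + dig * conj P2 = 0)
    (e9 : phi * (P20 : ℂ) - phi * conj P2 + kap * conj P40 + (-2 * chi - eta) * conj P31
        + (chi + psi) * conj P3 - dig * conj P4 + sig * P32 = 0)
    (e10 : (2 * chi + eta) * (P20 : ℂ) + (-chi - 3 * eta + psi) * P2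
        + (-chi - psi) * conj P2 - dig * conj P31 + dig * conj P3
        - 2 * kap * conj P32 + kap * P32 = 0)
    (e11 : -2 * kap * (P20 : ℂ) = 0)
    (e12 : 2 * sig * (P20 : ℂ) - 2 * kap * conj P31 = 0)
    (e13 : (chi - eta) * (P20 : ℂ) + (-chi - 3 * eta) * P2
        - dig * conj P31 - 2 * kap * conj P32 = 0)
    (e14 : phi * (P20 : ℂ) - phi * P2 + (-eta - psi) * conj P31 - 2 * sig * conj P32 = 0)
    (e15 : (eta + psi) * (P20 : ℂ) + (-3 * eta + psi) * P2 = 0) :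
    kap = 0 ∧ sig = 0 ∧ dig = 0 ∧ chi = 0 ∧ psi = 0 ∧ eta = 0 ∧ phi = 0 := by

  have cancel : ∀ a b : ℂ, a * b = 0 → b ≠ 0 → a = 0 := by
    intro a b h hb
    rcases mul_eq_zero.mp h with h | h
    · exact h
    · exact absurd h hb
  rcases hdeg with ⟨h0, hP2ne, hPnr⟩ | ⟨hP2, hP20⟩
  · -- Case A : P20 = 0, P2 ≠ 0, P2 not real
    have h0c : (P20 : ℂ) = 0 := by exact_mod_cast congrArg (Complex.ofReal ·) h0
    have hk : kap = 0 := cancel _ _ (by linear_combination (-(1:ℂ)/3) * e2 + (kap/3) * h0c) hP2ne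
    have hs : sig = 0 := cancel _ _
      (by linear_combination ((1:ℂ)/3) * e1 - (sig/3) * h0c + (conj P31/3) * hk) hP2ne
    have hsub : conj P2 - P2 ≠ 0 := sub_ne_zero.mpr (fun h => hPnr h.symm)
    have hd : dig = 0 := cancel _ _ (by linear_combination e5) hsub
    have h15 : (psi - 3 * eta) * P2 = 0 := by
      linear_combination e15 - (eta + psi) * h0c
    have hA : psi * P2 + (chi + psi) * conj P2 = 0 := by
      linear_combination e3 - (-chi + 2*psi) * h0c + conj P3 * hd + P32 * hk
    have hB : -chi * P2 + (chi + psi) * conj P2 = 0 := by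
      linear_combination e7 - (-eta + 2*psi) * h0c + (conj P31 + conj P3) * hd
        + (2 * conj P32 + P32) * hk - h15
    have hcp : chi + psi = 0 := cancel _ _ (by linear_combination hA - hB) hP2ne
    have hc : chi = 0 := by
      have h := cancel _ _ (show -chi * P2 = 0 by linear_combination hB - conj P2 * hcp) hP2ne
      linear_combination -h
    have hpsi : psi = 0 := by linear_combination hcp - hc
    have heta : eta = 0 := by
      have := cancel _ _ h15 hP2ne
      linear_combination (-(1:ℂ)/3) * this + (1/3) * hpsi
    have hphi : phi = 0 := cancel _ _
      (by linear_combination -e14 + phi * h0c + conj P31 * (by linear_combination -heta - hpsi :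
            (-eta - psi : ℂ) = 0) - 2 * conj P32 * hs) hP2ne
    exact ⟨hk, hs, hd, hc, hpsi, heta, hphi⟩
  · -- Case B : P2 = 0, P20 ≠ 0
    have hP20c : (P20 : ℂ) ≠ 0 := Complex.ofReal_ne_zero.mpr hP20
    have hconj : conj P2 = 0 := by rw [hP2, map_zero]
    have hk : kap = 0 := cancel _ _ (by linear_combination (-(1:ℂ)/2) * e11) hP20c
    have hs : sig = 0 := cancel _ _ (by linear_combination ((1:ℂ)/2) * e12 + conj P31 * hk) hP20c
    have hd : dig = 0 := cancel _ _ (by linear_combination e8 - dig * hconj) hP20c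
    have h15 : eta + psi = 0 := cancel _ _
      (by linear_combination e15 - (-3*eta + psi) * hP2) hP20c
    have h13 : chi - eta = 0 := cancel _ _
      (by linear_combination e13 - (-chi - 3*eta) * hP2 + conj P31 * hd + 2 * conj P32 * hk) hP20c
    have h3 : -chi + 2 * psi = 0 := cancel _ _
      (by linear_combination e3 - psi * hP2 - (chi + psi) * hconj + conj P3 * hd + P32 * hk) hP20c
    have hpsi : psi = 0 := by linear_combination ((1:ℂ)/3) * h3 + (1/3) * h13 + (1/3) * h15
    have heta : eta = 0 := by linear_combination h15 - hpsi
    have hc : chi = 0 := by linear_combination h13 + heta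
    have hphi : phi = 0 := cancel _ _
      (by linear_combination e14 + phi * hP2 + conj P31 * heta + conj P31 * hpsi
            + 2 * conj P32 * hs) hP20c
    exact ⟨hk, hs, hd, hc, hpsi, heta, hphi⟩
end

section
/- Eigenvectors of the algebraically special Weyl curvature operator (Table 1): assume Ψ₂⁰ ≠ 0, Ψ₂⁰ + Ψ₂ ≠ 0 and Ψ₂⁰ + conj(Ψ₂) ≠ 0. Then the transpose Mᵀ of the matrix M has the following eigenvectors in ℂ¹⁰: the standard basis vectors e₁, e₂, e₃ with eigenvalues Ψ₂, conj(Ψ₂), Ψ₂⁰ respectively; the vector u with u₁ = conj(Ψ₃²)/(Ψ₂⁰ + Ψ₂), u₃ = conj(Ψ₃¹)/(2Ψ₂⁰), u₄ = −1 and all other components zero, with eigenvalue −Ψ₂⁰; and the vector w with w₂ = Ψ₃²/(Ψ₂⁰ + conj(Ψ₂)), w₃ = Ψ₃¹/(2Ψ₂⁰), w₅ = −1 and all other components zero, with eigenvalue −Ψ₂⁰. That is, Mᵀe₁ = Ψ₂·e₁, Mᵀe₂ = conj(Ψ₂)·e₂, Mᵀe₃ = Ψ₂⁰·e₃, Mᵀu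 = −Ψ₂⁰·u and Mᵀw = −Ψ₂⁰·w. -/
open ComplexConjugate

/-- The Weyl curvature operator of a five-dimensional spacetime that is
algebraically special relative to an optical structure, written in the
adapted basis of 2-forms (equation (A.1) of the paper). -/
noncomputable def weylOp (P2 P3 P31 P32 P4 P40 : ℂ) (P20 P30 : ℝ) :
    Matrix (Fin 10) (Fin 10) ℂ :=
  Matrix.of
    ![![P2, 0, 0, 0, 0, 0, 0, 0, 0, 0],
      ![0, conj P2, 0, 0, 0, 0, 0, 0, 0, 0],
      ![0, 0, (P20 : ℂ), 0, 0, 0, 0, 0, 0, 0],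
      ![conj P32, 0, conj P31, -(P20 : ℂ), 0, 0, 0, 0, 0, 0],
      ![0, P32, P31, 0, -(P20 : ℂ), 0, 0, 0, 0, 0],
      ![-P3, -conj P3, conj P32 + P32, 0, 0, -(P20 : ℂ) - P2 - conj P2,
        -P2 + conj P2, 0, 0, 0],
      ![-P3 + P31, conj P3 - conj P31, -P32 + conj P32, 0, 0, -P2 + conj P2,
        -P2 - conj P2 + (P20 : ℂ), 0, 0, 0],
      ![P4, (P30 : ℂ), P40, 0, conj P32, P3, P3 - P31, P2, 0, 0],
      ![(P30 : ℂ), conj P4, conj P40, P32, 0, conj P3, -conj P3 + conj P31, 0,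
        conj P2, 0],
      ![P40, conj P40, -2 * (P30 : ℂ), P31, conj P31, -conj P32 - P32,
        P32 - conj P32, 0, 0, (P20 : ℂ)]]

open Matrix

section
variable {α : Type*} (a₀ a₁ a₂ a₃ a₄ a₅ a₆ a₇ a₈ a₉ : α)

theorem vec10_eval₀ : ![a₀,a₁,a₂,a₃,a₄,a₅,a₆,a₇,a₈,a₉] 0 = a₀ := rfl
theorem vec10_eval₁ : ![a₀,a₁,a₂,a₃,a₄,a₅,a₆,a₇,a₈,a₉] 1 = a₁ := rfl
theorem vec10_eval₂ : ![a₀,a₁,a₂,a₃,a₄,a₅,a₆,a₇,a₈,a₉] 2 = a₂ := rfl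
theorem vec10_eval₃ : ![a₀,a₁,a₂,a₃,a₄,a₅,a₆,a₇,a₈,a₉] 3 = a₃ := rfl
theorem vec10_eval₄ : ![a₀,a₁,a₂,a₃,a₄,a₅,a₆,a₇,a₈,a₉] 4 = a₄ := rfl
theorem vec10_eval₅ : ![a₀,a₁,a₂,a₃,a₄,a₅,a₆,a₇,a₈,a₉] 5 = a₅ := rfl
theorem vec10_eval₆ : ![a₀,a₁,a₂,a₃,a₄,a₅,a₆,a₇,a₈,a₉] 6 = a₆ := rfl
theorem vec10_eval₇ : ![a₀,a₁,a₂,a₃,a₄,a₅,a₆,a₇,a₈,a₉] 7 = a₇ := rfl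
theorem vec10_eval₈ : ![a₀,a₁,a₂,a₃,a₄,a₅,a₆,a₇,a₈,a₉] 8 = a₈ := rfl
theorem vec10_eval₉ : ![a₀,a₁,a₂,a₃,a₄,a₅,a₆,a₇,a₈,a₉] 9 = a₉ := rfl

end

attribute [simp] vec10_eval₀ vec10_eval₁ vec10_eval₂ vec10_eval₃ vec10_eval₄
  vec10_eval₅ vec10_eval₆ vec10_eval₇ vec10_eval₈ vec10_eval₉

/-- Eigenvectors of the algebraically special Weyl curvature operator
(Table 1 of the paper): `e₁, e₂, e₃` are eigenvectors of `Mᵀ` with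
eigenvalues `Ψ₂, conj Ψ₂, Ψ₂⁰`, and `u, w` are eigenvectors with the
repeated eigenvalue `−Ψ₂⁰`. -/
theorem weylOp_eigenvectors (P2 P3 P31 P32 P4 P40 : ℂ) (P20 P30 : ℝ)
    (h0 : (P20 : ℂ) ≠ 0) (h1 : (P20 : ℂ) + P2 ≠ 0) (h2 : (P20 : ℂ) + conj P2 ≠ 0) :
    (weylOp P2 P3 P31 P32 P4 P40 P20 P30)ᵀ *ᵥ (Pi.single 0 1 : Fin 10 → ℂ)
        = P2 • (Pi.single 0 1 : Fin 10 → ℂ) ∧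
    (weylOp P2 P3 P31 P32 P4 P40 P20 P30)ᵀ *ᵥ (Pi.single 1 1 : Fin 10 → ℂ)
        = conj P2 • (Pi.single 1 1 : Fin 10 → ℂ) ∧
    (weylOp P2 P3 P31 P32 P4 P40 P20 P30)ᵀ *ᵥ (Pi.single 2 1 : Fin 10 → ℂ)
        = (P20 : ℂ) • (Pi.single 2 1 : Fin 10 → ℂ) ∧
    (weylOp P2 P3 P31 P32 P4 P40 P20 P30)ᵀ *ᵥ
        ![conj P32 / ((P20 : ℂ) + P2), 0, conj P31 / (2 * (P20 : ℂ)), -1, 0, 0, 0, 0, 0, 0]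
        = (-(P20 : ℂ)) •
        ![conj P32 / ((P20 : ℂ) + P2), 0, conj P31 / (2 * (P20 : ℂ)), -1, 0, 0, 0, 0, 0, 0] ∧
    (weylOp P2 P3 P31 P32 P4 P40 P20 P30)ᵀ *ᵥ
        ![0, P32 / ((P20 : ℂ) + conj P2), P31 / (2 * (P20 : ℂ)), 0, -1, 0, 0, 0, 0, 0]
        = (-(P20 : ℂ)) •
        ![0, P32 / ((P20 : ℂ) + conj P2), P31 / (2 * (P20 : ℂ)), 0, -1, 0, 0, 0, 0, 0] := by
  have h1' : P2 + (P20 : ℂ) ≠ 0 := by rwa [add_comm]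
  have h2' : conj P2 + (P20 : ℂ) ≠ 0 := by rwa [add_comm]
  refine ⟨?_, ?_, ?_, ?_, ?_⟩ <;>
    · funext i
      fin_cases i <;>
        simp [weylOp, mulVec, dotProduct, Fin.sum_univ_succ, Pi.single_apply,
          vec10_eval₀, vec10_eval₁, vec10_eval₂, vec10_eval₃, vec10_eval₄,
          vec10_eval₅, vec10_eval₆, vec10_eval₇, vec10_eval₈, vec10_eval₉] <;>
        (try field_simp) <;> ring
end

section
/- Geometric multiplicity of the eigenvalue −Ψ₂⁰ (part of the Segre characteristic [2 2 2 (1 1) 1 1] claim of Proposition 3.3): assume Ψ₂⁰ ≠ 0, Ψ₂⁰ + Ψ₂ ≠ 0, Ψ₂⁰ + conj(Ψ₂) ≠ 0, and 2·Ψ₂·conj(Ψ₂) − Ψ₂⁰·(Ψ₂ + conj(Ψ₂)) ≠ 0. Then the eigenspace { v ∈ ℂ¹⁰ : Mᵀ v = −Ψ₂⁰ · v } has complex dimension exactly 2. -/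
open ComplexConjugate

open Matrix

/-! With indices `0, …, 9`, `Mᵀ` is block upper triangular for the blocks `{0,1,2}`, `{3,4}`,
`{5,6}`, `{7,8,9}` and acts as `-Ψ₂⁰` on `{3,4}`. On the other diagonal blocks `Mᵀ + Ψ₂⁰` is
invertible: it is diagonal with entries `Ψ₂⁰ + Ψ₂`, `Ψ₂⁰ + conj Ψ₂`, `2Ψ₂⁰` on `{0,1,2}` and
`{7,8,9}`, and its determinant on `{5,6}` is `4Ψ₂ conj Ψ₂ - 2Ψ₂⁰(Ψ₂ + conj Ψ₂)`. Back substitution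
therefore shows that an eigenvector for `-Ψ₂⁰` vanishes on `{5,…,9}` and is determined by its
coordinates `3` and `4`, which can be prescribed freely. -/

theorem eq_zero_and_eq_zero_of_det_ne_zero {R : Type*} [CommRing R] [NoZeroDivisors R]
    {a b c d x y : R} (hdet : a * d - b * c ≠ 0) (h₁ : a * x + b * y = 0)
    (h₂ : c * x + d * y = 0) : x = 0 ∧ y = 0 :=
  ⟨eq_zero_of_ne_zero_of_mul_left_eq_zero hdet (by linear_combination d * h₁ - b * h₂),
    eq_zero_of_ne_zero_of_mul_left_eq_zero hdet (by linear_combination a * h₂ - c * h₁)⟩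

theorem Submodule.finrank_eq_card_of_coords_free_and_determining {K ι κ : Type*} [Field K]
    [Fintype κ] (E : Submodule K (ι → K)) (s : κ → ι)
    (hdet : ∀ v ∈ E, v ∘ s = 0 → v = 0) (hfree : ∀ c : κ → K, ∃ v ∈ E, v ∘ s = c) :
    Module.finrank K E = Fintype.card κ := by
  let φ : E →ₗ[K] κ → K := (LinearMap.funLeft K K s).comp E.subtype
  have hφ : Function.Bijective φ := by
    refine ⟨?_, fun c => ?_⟩
    · rw [← LinearMap.ker_eq_bot, eq_bot_iff]
      rintro ⟨v, hv⟩ hker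
      simpa using hdet v hv hker
    · obtain ⟨v, hv, rfl⟩ := hfree c
      exact ⟨⟨v, hv⟩, rfl⟩
  rw [(LinearEquiv.ofBijective φ hφ).finrank_eq, Module.finrank_fintype_fun_eq_card]

section

variable {P2 P3 P31 P32 P4 P40 : ℂ} {P20 P30 : ℝ}

theorem weylOp_transpose_mulVec (v : Fin 10 → ℂ) :
    (weylOp P2 P3 P31 P32 P4 P40 P20 P30)ᵀ *ᵥ v =
      ![P2 * v 0 + conj P32 * v 3 - P3 * v 5 + (P31 - P3) * v 6 + P4 * v 7 + P30 * v 8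
          + P40 * v 9,
        conj P2 * v 1 + P32 * v 4 - conj P3 * v 5 + (conj P3 - conj P31) * v 6 + P30 * v 7
          + conj P4 * v 8 + conj P40 * v 9,
        P20 * v 2 + conj P31 * v 3 + P31 * v 4 + (conj P32 + P32) * v 5
          + (conj P32 - P32) * v 6 + P40 * v 7 + conj P40 * v 8 - 2 * P30 * v 9,
        -P20 * v 3 + P32 * v 8 + P31 * v 9,
        -P20 * v 4 + conj P32 * v 7 + conj P31 * v 9,
        -(P20 + P2 + conj P2) * v 5 + (conj P2 - P2) * v 6 + P3 * v 7 + conj P3 * v 8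
          - (conj P32 + P32) * v 9,
        (conj P2 - P2) * v 5 + (P20 - P2 - conj P2) * v 6 + (P3 - P31) * v 7
          + (conj P31 - conj P3) * v 8 + (P32 - conj P32) * v 9,
        P2 * v 7, conj P2 * v 8, P20 * v 9] := by
  ext i
  fin_cases i <;> simp [weylOp, mulVec, dotProduct, Fin.sum_univ_succ] <;> ring

theorem mem_eigenspace_weylOp_transpose_iff {v : Fin 10 → ℂ} :
    v ∈ Module.End.eigenspace (toLin' (weylOp P2 P3 P31 P32 P4 P40 P20 P30)ᵀ) (-(P20 : ℂ)) ↔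
      (weylOp P2 P3 P31 P32 P4 P40 P20 P30)ᵀ *ᵥ v = -(P20 : ℂ) • v := by
  rw [Module.End.mem_eigenspace_iff, toLin'_apply]

theorem weylOp_eigenvector_tail_eq_zero (h0 : (P20 : ℂ) ≠ 0) (h1 : (P20 : ℂ) + P2 ≠ 0)
    (h2 : (P20 : ℂ) + conj P2 ≠ 0) (h3 : 2 * P2 * conj P2 - (P20 : ℂ) * (P2 + conj P2) ≠ 0)
    {v : Fin 10 → ℂ}
    (hv : v ∈
      Module.End.eigenspace (toLin' (weylOp P2 P3 P31 P32 P4 P40 P20 P30)ᵀ) (-(P20 : ℂ))) :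
    v 5 = 0 ∧ v 6 = 0 ∧ v 7 = 0 ∧ v 8 = 0 ∧ v 9 = 0 := by
  rw [mem_eigenspace_weylOp_transpose_iff, weylOp_transpose_mulVec] at hv
  have e5 := congrFun hv 5
  have e6 := congrFun hv 6
  have e7 := congrFun hv 7
  have e8 := congrFun hv 8
  have e9 := congrFun hv 9
  simp only [Pi.smul_apply, smul_eq_mul, cons_val] at e5 e6 e7 e8 e9
  have hv7 : v 7 = 0 :=
    eq_zero_of_ne_zero_of_mul_left_eq_zero h1 (by linear_combination e7)
  have hv8 : v 8 = 0 :=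
    eq_zero_of_ne_zero_of_mul_left_eq_zero h2 (by linear_combination e8)
  have hv9 : v 9 = 0 :=
    eq_zero_of_ne_zero_of_mul_left_eq_zero (mul_ne_zero two_ne_zero h0) (by linear_combination e9)
  obtain ⟨hv5, hv6⟩ : v 5 = 0 ∧ v 6 = 0 :=
    eq_zero_and_eq_zero_of_det_ne_zero
      (a := P2 + conj P2) (b := P2 - conj P2) (c := conj P2 - P2) (d := 2 * P20 - P2 - conj P2)
      (fun h => h3 (by linear_combination -h / 2))
      (by linear_combination -e5 + P3 * hv7 + conj P3 * hv8 - (conj P32 + P32) * hv9)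
      (by linear_combination e6 + (P31 - P3) * hv7 + (conj P3 - conj P31) * hv8
        + (conj P32 - P32) * hv9)
  exact ⟨hv5, hv6, hv7, hv8, hv9⟩

noncomputable def weylNegEigenvector (P2 P31 P32 : ℂ) (P20 : ℝ) (a b : ℂ) : Fin 10 → ℂ :=
  ![-(conj P32 * a) / (P20 + P2), -(P32 * b) / (P20 + conj P2),
    -(conj P31 * a + P31 * b) / (2 * P20), a, b, 0, 0, 0, 0, 0]

theorem weylNegEigenvector_mem_eigenspace (h0 : (P20 : ℂ) ≠ 0) (h1 : (P20 : ℂ) + P2 ≠ 0)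
    (h2 : (P20 : ℂ) + conj P2 ≠ 0) (a b : ℂ) :
    weylNegEigenvector P2 P31 P32 P20 a b ∈
      Module.End.eigenspace (toLin' (weylOp P2 P3 P31 P32 P4 P40 P20 P30)ᵀ) (-(P20 : ℂ)) := by
  rw [mem_eigenspace_weylOp_transpose_iff, weylOp_transpose_mulVec]
  ext i
  fin_cases i <;> simp [weylNegEigenvector] <;> field_simp <;> ring

theorem eq_weylNegEigenvector_of_mem_eigenspace (h0 : (P20 : ℂ) ≠ 0)
    (h1 : (P20 : ℂ) + P2 ≠ 0) (h2 : (P20 : ℂ) + conj P2 ≠ 0)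
    (h3 : 2 * P2 * conj P2 - (P20 : ℂ) * (P2 + conj P2) ≠ 0) {v : Fin 10 → ℂ}
    (hv : v ∈
      Module.End.eigenspace (toLin' (weylOp P2 P3 P31 P32 P4 P40 P20 P30)ᵀ) (-(P20 : ℂ))) :
    v = weylNegEigenvector P2 P31 P32 P20 (v 3) (v 4) := by
  obtain ⟨hv5, hv6, hv7, hv8, hv9⟩ := weylOp_eigenvector_tail_eq_zero h0 h1 h2 h3 hv
  rw [mem_eigenspace_weylOp_transpose_iff, weylOp_transpose_mulVec] at hv
  have e0 := congrFun hv 0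
  have e1 := congrFun hv 1
  have e2 := congrFun hv 2
  simp only [Pi.smul_apply, smul_eq_mul, cons_val, hv5, hv6, hv7, hv8, hv9, mul_zero,
    add_zero, sub_zero] at e0 e1 e2
  have hv0 : v 0 = -(conj P32 * v 3) / (P20 + P2) := by
    rw [eq_div_iff h1]
    linear_combination e0
  have hv1 : v 1 = -(P32 * v 4) / (P20 + conj P2) := by
    rw [eq_div_iff h2]
    linear_combination e1
  have hv2 : v 2 = -(conj P31 * v 3 + P31 * v 4) / (2 * P20) := by
    rw [eq_div_iff (mul_ne_zero two_ne_zero h0)]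
    linear_combination e2
  ext i
  fin_cases i <;> simp [weylNegEigenvector, *]

end

/-- Geometric multiplicity of the eigenvalue `−Ψ₂⁰` (part of the Segre
characteristic `[2 2 2 (1 1) 1 1]` claim of Proposition 3.3): when `−Ψ₂⁰` is
distinct from the other eigenvalues, the eigenspace
`{v : Mᵀ v = −Ψ₂⁰ v}` has complex dimension exactly `2`. -/
theorem weylOp_eigenspace_dim (P2 P3 P31 P32 P4 P40 : ℂ) (P20 P30 : ℝ)
    (h0 : (P20 : ℂ) ≠ 0) (h1 : (P20 : ℂ) + P2 ≠ 0) (h2 : (P20 : ℂ) + conj P2 ≠ 0)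
    (h3 : 2 * P2 * conj P2 - (P20 : ℂ) * (P2 + conj P2) ≠ 0) :
    Module.finrank ℂ
      ↥(Module.End.eigenspace
          (Matrix.toLin' (weylOp P2 P3 P31 P32 P4 P40 P20 P30)ᵀ) (-(P20 : ℂ))) = 2 := by
  refine (Submodule.finrank_eq_card_of_coords_free_and_determining _ ![3, 4]
    (fun v hv hv34 => ?_) (fun c => ⟨weylNegEigenvector P2 P31 P32 P20 (c 0) (c 1),
      weylNegEigenvector_mem_eigenspace h0 h1 h2 _ _, ?_⟩)).trans (Fintype.card_fin 2)
  · have hv3 : v 3 = 0 := congrFun hv34 0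
    have hv4 : v 4 = 0 := congrFun hv34 1
    rw [eq_weylNegEigenvector_of_mem_eigenspace h0 h1 h2 h3 hv, hv3, hv4]
    ext i
    fin_cases i <;> simp [weylNegEigenvector]
  · ext i
    fin_cases i <;> rfl
end

section
/- Support of the eigenforms for the simple eigenvalues (part of Proposition 3.3, 'the eigenvectors are spanned by k∧m̄, k∧m, k∧u, k∧ℓ and m̄∧m'): let λ ∈ ℂ with λ ∉ {Ψ₂, conj(Ψ₂), Ψ₂⁰, −Ψ₂⁰}, and let v ∈ ℂ¹⁰ satisfy Mᵀ v = λ · v. Then v₄ = v₅ = v₈ = v₉ = v₁₀ = 0; that is, v lies in the span of the standard basis vectors e₁, e₂, e₃, e₆, e₇. -/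
open ComplexConjugate

open Matrix

theorem Matrix.apply_eq_zero_of_transpose_mulVec_eq_smul {n R : Type*} [Fintype n]
    [CommRing R] [NoZeroDivisors R] {M : Matrix n n R} {v : n → R} {lam : R}
    (hv : Mᵀ *ᵥ v = lam • v) {i : n} (hcol : ∀ j ≠ i, M j i = 0 ∨ v j = 0)
    (hlam : lam ≠ M i i) : v i = 0 := by
  have hdiag : M i i * v i = lam * v i := by
    have := congrFun hv i
    rw [mulVec, dotProduct, Finset.sum_eq_single i (fun j _ hj => ?_) (by simp)] at this
    · simpa using this
    · rcases hcol j hj with h | h <;> simp [h]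
  have : (lam - M i i) * v i = 0 := by linear_combination -hdiag
  exact (mul_eq_zero.mp this).resolve_left (sub_ne_zero.mpr hlam)

/-- Support of the eigenforms for the simple eigenvalues (part of
Proposition 3.3): any eigenvector of `Mᵀ` whose eigenvalue differs from
`Ψ₂, conj Ψ₂, Ψ₂⁰, −Ψ₂⁰` has vanishing components `4, 5, 8, 9, 10`, i.e. it
lies in the span of the 2-forms `k∧m̄, k∧m, k∧u, k∧ℓ, m̄∧m`. -/
theorem weylOp_simple_eigenvector_support (P2 P3 P31 P32 P4 P40 : ℂ) (P20 P30 : ℝ)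
    (lam : ℂ) (hlam1 : lam ≠ P2) (hlam2 : lam ≠ conj P2)
    (hlam3 : lam ≠ (P20 : ℂ)) (hlam4 : lam ≠ -(P20 : ℂ))
    (v : Fin 10 → ℂ)
    (hv : (weylOp P2 P3 P31 P32 P4 P40 P20 P30)ᵀ *ᵥ v = lam • v) :
    v 3 = 0 ∧ v 4 = 0 ∧ v 7 = 0 ∧ v 8 = 0 ∧ v 9 = 0 := by
  -- Off the diagonal, columns 7, 8, 9 of `weylOp` vanish and columns 3, 4 meet only rows 7–9.
  have hv7 : v 7 = 0 := apply_eq_zero_of_transpose_mulVec_eq_smul hv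
    (fun j hj => by fin_cases j <;> simp_all [weylOp]) hlam1
  have hv8 : v 8 = 0 := apply_eq_zero_of_transpose_mulVec_eq_smul hv
    (fun j hj => by fin_cases j <;> simp_all [weylOp]) hlam2
  have hv9 : v 9 = 0 := apply_eq_zero_of_transpose_mulVec_eq_smul hv
    (fun j hj => by fin_cases j <;> simp_all [weylOp]) hlam3
  have hv3 : v 3 = 0 := apply_eq_zero_of_transpose_mulVec_eq_smul hv
    (fun j hj => by fin_cases j <;> simp_all [weylOp]) hlam4
  have hv4 : v 4 = 0 := apply_eq_zero_of_transpose_mulVec_eq_smul hv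
    (fun j hj => by fin_cases j <;> simp_all [weylOp]) hlam4
  exact ⟨hv3, hv4, hv7, hv8, hv9⟩
end
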